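/- arXiv:2412.12999 — 2 statements merged into one kernel-verified Lean document; each statement's English description precedes it below -/
import Mathlib

section
/- Let a = {a_n} be a positive non-increasing sequence with ∑ a_n = 1 and suppose 2 < inf_n s_n(a)/s_{n+1}(a) ≤ sup_n s_n(a)/s_{n+1}(a) < ∞. Then the sequence a is doubling: there exists c > 0 such that a_n ≤ c·a_{2n} for all n. -/
open Filter Set Topology

/-- Number of closed balls of radius `δ` needed to cover `F`. -/
noncomputable def coverNum (F : Set ℝ) (δ : ℝ) : ℕ :=
  sInf {n : ℕ | ∃ S : Finset ℝ, S.card = n ∧ F ⊆ ⋃ x ∈ S, Metric.closedBall x δ}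

/-- Upper box-counting dimension. -/
noncomputable def upperBoxDim (F : Set ℝ) : ℝ :=
  limsup (fun δ : ℝ => Real.log (coverNum F δ) / -Real.log δ) (nhdsWithin 0 (Set.Ioi 0))

/-- Lower box-counting dimension. -/
noncomputable def lowerBoxDim (F : Set ℝ) : ℝ :=
  liminf (fun δ : ℝ => Real.log (coverNum F δ) / -Real.log δ) (nhdsWithin 0 (Set.Ioi 0))

/-- Assouad dimension. -/
noncomputable def assouadDim (E : Set ℝ) : ℝ :=
  sInf {α : ℝ | ∃ c > (0:ℝ), ∃ ρ > (0:ℝ), ∀ x ∈ E, ∀ r R : ℝ, 0 < r → r < R → R < ρ →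
    (coverNum (Metric.ball x R ∩ E) r : ℝ) ≤ c * (R / r) ^ α}

/-- Lower (Assouad) dimension. -/
noncomputable def lowerAssouadDim (E : Set ℝ) : ℝ :=
  sSup {α : ℝ | ∃ c > (0:ℝ), ∃ ρ > (0:ℝ), ∀ x ∈ E, ∀ r R : ℝ, 0 < r → r < R → R < ρ →
    c * (R / r) ^ α ≤ (coverNum (Metric.ball x R ∩ E) r : ℝ)}

/-- Upper θ-intermediate dimension (with the convention that at θ = 0 it is the
Hausdorff dimension). -/
noncomputable def upperIntDim (θ : ℝ) (F : Set ℝ) : ℝ :=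
  if θ = 0 then (dimH F).toReal else
  sInf {s : ℝ | 0 ≤ s ∧ ∀ ε > (0:ℝ), ∃ δ₀ > (0:ℝ), ∀ δ : ℝ, 0 < δ → δ ≤ δ₀ →
    ∃ (I : Finset ℕ) (U : ℕ → Set ℝ), (F ⊆ ⋃ i ∈ I, U i) ∧
      (∀ i ∈ I, δ ^ (1 / θ) ≤ Metric.diam (U i) ∧ Metric.diam (U i) ≤ δ) ∧
      ∑ i ∈ I, Metric.diam (U i) ^ s ≤ ε}

/-- Lower θ-intermediate dimension (with the convention that at θ = 0 it is the
Hausdorff dimension). -/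
noncomputable def lowerIntDim (θ : ℝ) (F : Set ℝ) : ℝ :=
  if θ = 0 then (dimH F).toReal else
  sInf {s : ℝ | 0 ≤ s ∧ ∀ ε > (0:ℝ), ∀ δ₀ > (0:ℝ), ∃ δ : ℝ, 0 < δ ∧ δ ≤ δ₀ ∧
    ∃ (I : Finset ℕ) (U : ℕ → Set ℝ), (F ⊆ ⋃ i ∈ I, U i) ∧
      (∀ i ∈ I, δ ^ (1 / θ) ≤ Metric.diam (U i) ∧ Metric.diam (U i) ≤ δ) ∧
      ∑ i ∈ I, Metric.diam (U i) ^ s ≤ ε}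

/-- tails `x_n = ∑_{i=n}^∞ a_i` (the sequence `a` is indexed from 1;
the value `a 0` is irrelevant). -/
noncomputable def xseq (a : ℕ → ℝ) (n : ℕ) : ℝ := ∑' i : ℕ, a (n + i)

/-- `s_n = 2^{-n} x_{2^n}`. -/
noncomputable def sseq (a : ℕ → ℝ) (n : ℕ) : ℝ := xseq a (2 ^ n) / 2 ^ n

/-- `r_n = 2^{-n} ∑_{i=2^n}^{2^{n+1}-1} a_i`. -/
noncomputable def rseq (a : ℕ → ℝ) (n : ℕ) : ℝ :=
  (∑ i ∈ Finset.range (2 ^ n), a (2 ^ n + i)) / 2 ^ n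

/-- The countable complementary set `D_a = {x_k : k ≥ 1} ∪ {0}`. -/
noncomputable def Da (a : ℕ → ℝ) : Set ℝ := {0} ∪ {y : ℝ | ∃ k ≥ 1, y = xseq a k}

/-- Length of the interval corresponding to node `m` (in binary-tree indexing, root `1`)
in the construction of the decreasing Cantor set: the sum of the gaps in the subtree of `m`. -/
noncomputable def clen (a : ℕ → ℝ) (m : ℕ) : ℝ :=
  ∑' k : ℕ, ∑ i ∈ Finset.range (2 ^ k), a (2 ^ k * m + i)

/-- Left endpoint of the interval corresponding to node `m`. -/
noncomputable def lft (a : ℕ → ℝ) : ℕ → ℝ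
  | 0 => 0
  | 1 => 0
  | n + 2 =>
    if (n + 2) % 2 = 0 then lft a ((n + 2) / 2)
    else lft a ((n + 2) / 2) + clen a (n + 1) + a ((n + 2) / 2)
termination_by n => n
decreasing_by all_goals omega

/-- The closed interval corresponding to node `m`:  node `2^n + j - 1` is the
interval `I_{n,j}` of step `n`, for `1 ≤ j ≤ 2^n`. -/
noncomputable def node (a : ℕ → ℝ) (m : ℕ) : Set ℝ := Set.Icc (lft a m) (lft a m + clen a m)

/-- The decreasing Cantor set `C_a` associated with the sequence `a`. -/
noncomputable def cantorSetOf (a : ℕ → ℝ) : Set ℝ :=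
  ⋂ n : ℕ, ⋃ j ∈ Finset.Icc 1 (2 ^ n), node a (2 ^ n + j - 1)

/-- `E` is a complementary set of the sequence `a`: a closed subset of `[0,1]`
whose complement in `[0,1]` is a disjoint union of open intervals of lengths `a_1, a_2, …`. -/
def IsComplSet (a : ℕ → ℝ) (E : Set ℝ) : Prop :=
  ∃ g : ℕ → ℝ,
    (∀ n ≥ 1, Set.Ioo (g n) (g n + a n) ⊆ Set.Icc 0 1) ∧
    (∀ m ≥ 1, ∀ n ≥ 1, m ≠ n →
      Disjoint (Set.Ioo (g m) (g m + a m)) (Set.Ioo (g n) (g n + a n))) ∧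
    E = Set.Icc 0 1 \ ⋃ n ∈ {k : ℕ | 1 ≤ k}, Set.Ioo (g n) (g n + a n)

/-- `γ_{θ,a}(r) = max{ m : s_m ≥ s_r^{1/θ} }`. -/
noncomputable def gammaIdx (a : ℕ → ℝ) (θ : ℝ) (r : ℕ) : ℕ :=
  sSup {m : ℕ | sseq a r ^ (1 / θ) ≤ sseq a m}

/-! The block averages `r_n = s_n - 2 s_{n+1}` of `a` over `[2^n, 2^{n+1})` lie between
`a (2^{n+1})` and `a (2^n)` by monotonicity. Hence `a (2^{n+1}) ≤ s_n`, and the lower ratio bound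
gives `ε s_{n+1} ≤ r_n ≤ a (2^n)`, while the upper one moves `s` a bounded number of indices at the
cost of a factor `M` per index. For `2^k ≤ n < 2^{k+1}` this chains to
`a n ≤ a (2^k) ≤ s_{k-1} ≤ M^4 s_{k+3} ≤ (M^4 / ε) a (2^{k+2}) ≤ (M^4 / ε) a (2n)`. -/

section Tails

variable {a : ℕ → ℝ}

theorem xseq_eq_sum_range_add_xseq (ha : Summable a) (m k : ℕ) :
    xseq a m = ∑ i ∈ Finset.range k, a (m + i) + xseq a (m + k) := by
  have hm : Summable fun i => a (m + i) := ha.comp_injective (add_right_injective m)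
  rw [xseq, xseq, ← hm.sum_add_tsum_nat_add k]
  simp only [add_assoc, add_comm k]

theorem xseq_pos (ha : Summable a) (hpos : ∀ n ≥ 1, 0 < a n) {m : ℕ} (hm : 1 ≤ m) :
    0 < xseq a m :=
  (ha.comp_injective (add_right_injective m)).tsum_pos
    (fun i => (hpos (m + i) (by omega)).le) 0 (hpos (m + 0) hm)

theorem apply_le_xseq (ha : Summable a) (hpos : ∀ n ≥ 1, 0 < a n) {m : ℕ} (hm : 1 ≤ m) :
    a m ≤ xseq a m :=
  (ha.comp_injective (add_right_injective m)).le_tsum 0 fun i _ => (hpos (m + i) (by omega)).le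

theorem sseq_pos (ha : Summable a) (hpos : ∀ n ≥ 1, 0 < a n) (n : ℕ) : 0 < sseq a n :=
  div_pos (xseq_pos ha hpos Nat.one_le_two_pow) (by positivity)

theorem rseq_eq_sseq_sub (ha : Summable a) (n : ℕ) :
    rseq a n = sseq a n - 2 * sseq a (n + 1) := by
  have hsplit := xseq_eq_sum_range_add_xseq ha (2 ^ n) (2 ^ n)
  rw [← two_mul, ← pow_succ'] at hsplit
  rw [rseq, sseq, sseq, hsplit, pow_succ]
  field_simp
  ring

theorem apply_two_pow_succ_le_rseq (hanti : AntitoneOn a (Set.Ici 1)) (n : ℕ) :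
    a (2 ^ (n + 1)) ≤ rseq a n := by
  rw [rseq, le_div_iff₀ (by positivity)]
  have hle := Finset.card_nsmul_le_sum (Finset.range (2 ^ n)) (fun i => a (2 ^ n + i))
    (a (2 ^ (n + 1))) fun i hi => hanti (Set.mem_Ici.mpr (le_add_right Nat.one_le_two_pow))
      (Set.mem_Ici.mpr Nat.one_le_two_pow) (by rw [Finset.mem_range] at hi; rw [pow_succ]; omega)
  simpa [mul_comm] using hle

theorem rseq_le_apply_two_pow (hanti : AntitoneOn a (Set.Ici 1)) (n : ℕ) :
    rseq a n ≤ a (2 ^ n) := by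
  rw [rseq, div_le_iff₀ (by positivity)]
  have hle := Finset.sum_le_card_nsmul (Finset.range (2 ^ n)) (fun i => a (2 ^ n + i))
    (a (2 ^ n)) fun i _ => hanti (Set.mem_Ici.mpr Nat.one_le_two_pow)
      (Set.mem_Ici.mpr (le_add_right Nat.one_le_two_pow)) (by omega)
  simpa [mul_comm] using hle

/-- For `k = 0` the index `k - 1` truncates to `0`, and the claim is `a 1 ≤ x_1`. -/
theorem apply_two_pow_le_sseq_pred (ha : Summable a) (hpos : ∀ n ≥ 1, 0 < a n)
    (hanti : AntitoneOn a (Set.Ici 1)) (k : ℕ) : a (2 ^ k) ≤ sseq a (k - 1) := by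
  cases k with
  | zero => simpa [sseq] using apply_le_xseq ha hpos le_rfl
  | succ j =>
    have hs := sseq_pos ha hpos (j + 1)
    calc a (2 ^ (j + 1)) ≤ rseq a j := apply_two_pow_succ_le_rseq hanti j
      _ ≤ sseq a j := by rw [rseq_eq_sseq_sub ha]; linarith

theorem mul_sseq_succ_le_rseq {ε : ℝ} (ha : Summable a) {n : ℕ}
    (hs : 0 < sseq a (n + 1)) (hratio : 2 + ε ≤ sseq a n / sseq a (n + 1)) :
    ε * sseq a (n + 1) ≤ rseq a n := by
  rw [le_div_iff₀ hs] at hratio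
  rw [rseq_eq_sseq_sub ha]
  linarith

end Tails

theorem le_pow_mul_of_div_succ_le {s : ℕ → ℝ} {M : ℝ} (hs : ∀ n, 0 < s n) (hM : 0 ≤ M)
    (hratio : ∀ n, s n / s (n + 1) ≤ M) (n j : ℕ) : s n ≤ M ^ j * s (n + j) := by
  induction j with
  | zero => simp
  | succ j ih =>
    have hstep : s (n + j) ≤ M * s (n + j + 1) := (div_le_iff₀ (hs _)).mp (hratio _)
    calc s n ≤ M ^ j * s (n + j) := ih
      _ ≤ M ^ j * (M * s (n + j + 1)) := by gcongr
      _ = M ^ (j + 1) * s (n + (j + 1)) := by ring_nf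

theorem doubling_of_ratio_bounds_general (a : ℕ → ℝ) (hpos : ∀ n ≥ 1, 0 < a n) (hmono : ∀ n ≥ 1, a (n + 1) ≤ a n)
    (hsumm : Summable fun n => a (n + 1))
    (hinf : ∃ ε > (0:ℝ), ∀ n : ℕ, 2 + ε ≤ sseq a n / sseq a (n + 1))
    (hsup : ∃ M : ℝ, ∀ n : ℕ, sseq a n / sseq a (n + 1) ≤ M) :
    ∃ c > (0:ℝ), ∀ n ≥ 1, a n ≤ c * a (2 * n) := by
  obtain ⟨ε, hε, hinf⟩ := hinf
  obtain ⟨M, hsup⟩ := hsup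
  have ha : Summable a := (summable_nat_add_iff 1).mp hsumm
  have hanti : AntitoneOn a (Set.Ici 1) := antitoneOn_nat_Ici_of_succ_le hmono
  have hs := sseq_pos ha hpos
  have hM : 0 < M := by linarith [hinf 0, hsup 0]
  refine ⟨M ^ 4 / ε, by positivity, fun n hn => ?_⟩
  set k := Nat.log 2 n
  have hkn : 2 ^ k ≤ n := Nat.pow_log_le_self 2 (by omega)
  have hnk : n < 2 ^ (k + 1) := Nat.lt_pow_succ_log_self one_lt_two n
  have h2n : 2 * n ≤ 2 ^ (k - 1 + 3) :=
    calc 2 * n ≤ 2 ^ (k + 2) := by rw [pow_succ]; omega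
      _ ≤ 2 ^ (k - 1 + 3) := Nat.pow_le_pow_right two_pos (by omega)
  calc a n ≤ a (2 ^ k) := hanti (Set.mem_Ici.mpr Nat.one_le_two_pow) (Set.mem_Ici.mpr hn) hkn
    _ ≤ sseq a (k - 1) := apply_two_pow_le_sseq_pred ha hpos hanti k
    _ ≤ M ^ 4 * sseq a (k - 1 + 3 + 1) := le_pow_mul_of_div_succ_le hs hM.le hsup _ 4
    _ = M ^ 4 / ε * (ε * sseq a (k - 1 + 3 + 1)) := by field_simp
    _ ≤ M ^ 4 / ε * rseq a (k - 1 + 3) := by gcongr; exact mul_sseq_succ_le_rseq ha (hs _) (hinf _)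
    _ ≤ M ^ 4 / ε * a (2 ^ (k - 1 + 3)) := by gcongr; exact rseq_le_apply_two_pow hanti _
    _ ≤ M ^ 4 / ε * a (2 * n) := by
      gcongr
      exact hanti (Set.mem_Ici.mpr (by omega)) (Set.mem_Ici.mpr Nat.one_le_two_pow) h2n

/-- If `2 < inf_n s_n/s_{n+1} ≤ sup_n s_n/s_{n+1} < ∞`, then `a` is doubling. -/
theorem doubling_of_ratio_bounds (a : ℕ → ℝ) (hpos : ∀ n ≥ 1, 0 < a n) (hmono : ∀ n ≥ 1, a (n + 1) ≤ a n)
    (hsumm : Summable fun n => a (n + 1)) (htot : ∑' n : ℕ, a (n + 1) = 1)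
    (hinf : ∃ ε > (0:ℝ), ∀ n : ℕ, 2 + ε ≤ sseq a n / sseq a (n + 1))
    (hsup : ∃ M : ℝ, ∀ n : ℕ, sseq a n / sseq a (n + 1) ≤ M) :
    ∃ c > (0:ℝ), ∀ n ≥ 1, a n ≤ c * a (2 * n) :=
  doubling_of_ratio_bounds_general a hpos hmono hsumm hinf hsup
end

section
/- Let a = {a_n} be a positive non-increasing summable sequence with sum 1 and D_a = { ∑_{i=k}^∞ a_i : k ∈ ℕ } ∪ {0}. Then for all θ ∈ [0,1], the lower θ-intermediate dimension of D_a equals θb/(1 − (1−θ)b), where b is the lower box-counting dimension of D_a. -/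
open Filter Set Topology

/-!
The lower bound holds for every bounded `F ⊆ ℝ` with `b = dim_B F`. Splitting every set of a
cover of `F` by sets of diameters in `[δ^(1/θ), δ]` into balls of radius `δ^α` gives
`N_{δ^α}(F) ≲ (δ^(1-s-α) + δ^(-s/θ)) ∑ |U_i|^s`. For `s < θt / (1 - (1 - θ)t)` with `t < b`,
the choice `α = (1 - s) / (1 - t)` makes this at most `δ^(-αt)`, whereas `N_ρ(F) > ρ^(-t)` for
all small `ρ`.

For the upper bound take a scale `ρ` with `N_ρ(D_a) < ρ^(-t)`, `t` slightly above `b`, and let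
`K` be the first index with `a_K ≤ 2ρ`. The points `x_1, …, x_K` are `2ρ`-separated, so
`K ≤ N_ρ(D_a)`, and `D_a` is `2ρ`-dense in `[0, x_K]`, so `x_K ≤ 6ρ N_ρ(D_a)`. Covering
`x_1, …, x_K` by intervals of length `δ^(1/θ)` and `[0, x_K]` by intervals of length
`δ = ρ^(1 - (1 - θ)t)` costs `ρ^((sc - θt)/θ) + 6ρ^(sc - θt) + ρ^(cs)` with `c = 1 - (1 - θ)t`,
which is small as soon as `s > θt / c`.
-/

open Metric Bornology

section Covering

lemma Icc_subset_biUnion_Icc (u L : ℝ) {h : ℝ} (hh : 0 < h) :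
    Icc u (u + L) ⊆ ⋃ j ∈ Finset.range (⌊L / h⌋₊ + 1), Icc (u + j * h) (u + j * h + h) := by
  rintro y ⟨hyu, hyL⟩
  have hj := Nat.floor_le (div_nonneg (sub_nonneg.mpr hyu) hh.le)
  have hj' := Nat.lt_floor_add_one ((y - u) / h)
  rw [le_div_iff₀ hh] at hj
  rw [div_lt_iff₀ hh] at hj'
  simp only [mem_iUnion, Finset.mem_range, exists_prop]
  refine ⟨⌊(y - u) / h⌋₊, Nat.lt_succ_of_le (Nat.floor_le_floor ?_), by linarith, by linarith⟩
  gcongr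
  linarith

lemma coverNum_le_card {F : Set ℝ} {ρ : ℝ} {S : Finset ℝ}
    (h : F ⊆ ⋃ x ∈ S, closedBall x ρ) : coverNum F ρ ≤ S.card :=
  Nat.sInf_le ⟨S, rfl, h⟩

lemma exists_finset_cover_card_le {U : Set ℝ} (hU : IsBounded U) {ρ : ℝ} (hρ : 0 < ρ) :
    ∃ S : Finset ℝ, (S.card : ℝ) ≤ diam U / (2 * ρ) + 1 ∧ U ⊆ ⋃ x ∈ S, closedBall x ρ := by
  rcases U.eq_empty_or_nonempty with rfl | hne
  · exact ⟨∅, by simp [diam_empty], empty_subset _⟩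
  set u := sInf U
  have hsub : U ⊆ Icc u (u + diam U) := fun y hy => by
    rw [Real.diam_eq hU, add_sub_cancel]
    exact ⟨csInf_le hU.bddBelow hy, le_csSup hU.bddAbove hy⟩
  refine ⟨(Finset.range (⌊diam U / (2 * ρ)⌋₊ + 1)).image fun j : ℕ => u + j * (2 * ρ) + ρ,
    ?_, ?_⟩
  · calc (((Finset.range _).image _).card : ℝ) ≤ ((⌊diam U / (2 * ρ)⌋₊ + 1 : ℕ) : ℝ) :=
          mod_cast Finset.card_image_le.trans (Finset.card_range _).le
      _ ≤ diam U / (2 * ρ) + 1 := by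
          push_cast
          gcongr
          exact Nat.floor_le (by positivity)
  · refine hsub.trans ((Icc_subset_biUnion_Icc u _ (h := 2 * ρ) (by positivity)).trans ?_)
    intro y hy
    obtain ⟨j, hj, hyj⟩ := mem_iUnion₂.mp hy
    refine mem_iUnion₂.mpr ⟨u + j * (2 * ρ) + ρ, Finset.mem_image_of_mem _ hj, ?_⟩
    rw [Real.closedBall_eq_Icc]
    exact ⟨by linarith [hyj.1], by linarith [hyj.2]⟩

lemma exists_card_eq_coverNum {F : Set ℝ} (hF : IsBounded F) {ρ : ℝ} (hρ : 0 < ρ) :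
    ∃ S : Finset ℝ, S.card = coverNum F ρ ∧ F ⊆ ⋃ x ∈ S, closedBall x ρ := by
  obtain ⟨S, -, hS⟩ := exists_finset_cover_card_le hF hρ
  exact Nat.sInf_mem (s := {n | ∃ S : Finset ℝ, S.card = n ∧ F ⊆ ⋃ x ∈ S, closedBall x ρ})
    ⟨S.card, S, rfl, hS⟩

lemma coverNum_le_diam_div {F : Set ℝ} (hF : IsBounded F) {ρ : ℝ} (hρ : 0 < ρ) :
    (coverNum F ρ : ℝ) ≤ diam F / (2 * ρ) + 1 := by
  obtain ⟨S, hcard, hS⟩ := exists_finset_cover_card_le hF hρ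
  exact (Nat.cast_le.mpr (coverNum_le_card hS)).trans hcard

lemma one_le_coverNum {F : Set ℝ} (hF : IsBounded F) (hne : F.Nonempty) {ρ : ℝ} (hρ : 0 < ρ) :
    1 ≤ coverNum F ρ := by
  obtain ⟨S, hcard, hS⟩ := exists_card_eq_coverNum hF hρ
  obtain ⟨x, hx, -⟩ := mem_iUnion₂.mp (hS hne.some_mem)
  exact hcard ▸ Finset.card_pos.mpr ⟨x, hx⟩

lemma coverNum_le_sum_of_subset_biUnion {F : Set ℝ} {ρ : ℝ} (hρ : 0 < ρ) {ι : Type*}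
    {I : Finset ι} {U : ι → Set ℝ} (hcov : F ⊆ ⋃ i ∈ I, U i) (hU : ∀ i ∈ I, IsBounded (U i)) :
    (coverNum F ρ : ℝ) ≤ ∑ i ∈ I, (diam (U i) / (2 * ρ) + 1) := by
  choose! S hcard hS using fun i (hi : i ∈ I) => exists_finset_cover_card_le (hU i hi) hρ
  have hF : F ⊆ ⋃ x ∈ I.biUnion S, closedBall x ρ := by
    refine hcov.trans (iUnion₂_subset fun i hi => (hS i hi).trans ?_)
    exact biUnion_subset_biUnion_left fun x hx => Finset.mem_biUnion.mpr ⟨i, hi, hx⟩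
  calc (coverNum F ρ : ℝ) ≤ (I.biUnion S).card := mod_cast coverNum_le_card hF
    _ ≤ ∑ i ∈ I, ((S i).card : ℝ) := mod_cast Finset.card_biUnion_le
    _ ≤ _ := Finset.sum_le_sum hcard

lemma card_le_coverNum_of_separated {F : Set ℝ} (hF : IsBounded F) {ρ : ℝ} (hρ : 0 < ρ)
    {ι : Type*} {s : Finset ι} {p : ι → ℝ} (hpF : ∀ i ∈ s, p i ∈ F)
    (hsep : ∀ i ∈ s, ∀ j ∈ s, i ≠ j → 2 * ρ < dist (p i) (p j)) : s.card ≤ coverNum F ρ := by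
  obtain ⟨S, hcard, hS⟩ := exists_card_eq_coverNum hF hρ
  choose! c hcS hc using fun i (hi : i ∈ s) => mem_iUnion₂.mp (hS (hpF i hi))
  rw [← hcard]
  refine Finset.card_le_card_of_injOn c (fun i hi => hcS i hi) fun i hi j hj hij => ?_
  by_contra hne
  have := dist_triangle_right (p i) (p j) (c i)
  have hi' := mem_closedBall.mp (hc i hi)
  have hj' := mem_closedBall.mp (hc j hj)
  rw [hij] at hi' this
  linarith [hsep i hi j hj hne]

lemma sub_le_mul_coverNum {F : Set ℝ} (hF : IsBounded F) {ρ r u v : ℝ} (hρ : 0 < ρ)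
    (hr : 0 ≤ r) (hnear : ∀ y ∈ Icc u v, ∃ z ∈ F, dist y z ≤ r) :
    v - u ≤ 2 * (r + ρ) * coverNum F ρ := by
  obtain ⟨S, hcard, hS⟩ := exists_card_eq_coverNum hF hρ
  have hsub : Icc u v ⊆ ⋃ x ∈ S, closedBall x (r + ρ) := fun y hy => by
    obtain ⟨z, hzF, hyz⟩ := hnear y hy
    obtain ⟨x, hxS, hzx⟩ := mem_iUnion₂.mp (hS hzF)
    exact mem_iUnion₂.mpr ⟨x, hxS, (dist_triangle y z x).trans (add_le_add hyz hzx)⟩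
  have hvol := (MeasureTheory.measure_mono (μ := MeasureTheory.volume) hsub).trans
    (MeasureTheory.measure_biUnion_finset_le S _)
  simp only [Real.volume_Icc, Real.volume_closedBall, Finset.sum_const, nsmul_eq_mul] at hvol
  rw [← ENNReal.ofReal_natCast, ← ENNReal.ofReal_mul (Nat.cast_nonneg _), hcard,
    ENNReal.ofReal_le_ofReal_iff (by positivity)] at hvol
  linarith

end Covering

section BoxDim

lemma div_neg_log_lt_iff {x δ t : ℝ} (hx : 0 < x) (hδ0 : 0 < δ) (hδ1 : δ < 1) :
    Real.log x / -Real.log δ < t ↔ x < δ ^ (-t) := by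
  rw [div_lt_iff₀ (neg_pos.mpr (Real.log_neg hδ0 hδ1)), Real.log_lt_iff_lt_exp hx,
    Real.rpow_def_of_pos hδ0, show t * -Real.log δ = Real.log δ * -t by ring]

lemma lt_div_neg_log_iff {x δ t : ℝ} (hx : 0 < x) (hδ0 : 0 < δ) (hδ1 : δ < 1) :
    t < Real.log x / -Real.log δ ↔ δ ^ (-t) < x := by
  rw [lt_div_iff₀ (neg_pos.mpr (Real.log_neg hδ0 hδ1)), Real.lt_log_iff_exp_lt hx,
    Real.rpow_def_of_pos hδ0, show t * -Real.log δ = Real.log δ * -t by ring]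

lemma tendsto_one_add_div_neg_log (C : ℝ) :
    Tendsto (fun δ => 1 + C / -Real.log δ) (𝓝[>] 0) (𝓝 1) := by
  simpa using tendsto_const_nhds.add
    (tendsto_const_nhds.div_atTop (tendsto_neg_atBot_atTop.comp Real.tendsto_log_nhdsGT_zero))

lemma eventually_mem_Ioo_zero_one : ∀ᶠ δ in 𝓝[>] (0:ℝ), δ ∈ Ioo 0 1 := Ioo_mem_nhdsGT one_pos

variable {F : Set ℝ}

/-- `lowerBoxDim F` is, by definition, `liminf (coverExponent F) (𝓝[>] 0)`. -/
noncomputable def coverExponent (F : Set ℝ) (δ : ℝ) : ℝ :=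
  Real.log (coverNum F δ) / -Real.log δ

lemma coverExponent_nonneg {δ : ℝ} (hδ0 : 0 < δ) (hδ1 : δ < 1) : 0 ≤ coverExponent F δ :=
  div_nonneg (Real.log_natCast_nonneg _) (neg_nonneg.mpr (Real.log_nonpos hδ0.le hδ1.le))

lemma coverExponent_le (hF : IsBounded F) {δ : ℝ} (hδ0 : 0 < δ) (hδ1 : δ < 1) :
    coverExponent F δ ≤ 1 + Real.log (diam F / 2 + 1) / -Real.log δ := by
  have hlog : 0 < -Real.log δ := neg_pos.mpr (Real.log_neg hδ0 hδ1)
  have hC : 0 ≤ Real.log (diam F / 2 + 1) := Real.log_nonneg (by linarith [diam_nonneg (s := F)])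
  rw [coverExponent, div_le_iff₀ hlog, add_mul, one_mul, div_mul_cancel₀ _ hlog.ne']
  rcases Nat.eq_zero_or_pos (coverNum F δ) with h | h
  · simp only [h, CharP.cast_eq_zero, Real.log_zero]
    positivity
  have hN : (coverNum F δ : ℝ) ≤ (diam F / 2 + 1) / δ := by
    calc (coverNum F δ : ℝ) ≤ diam F / (2 * δ) + 1 := coverNum_le_diam_div hF hδ0
      _ ≤ diam F / (2 * δ) + 1 / δ := by gcongr; rw [le_div_iff₀ hδ0]; linarith
      _ = (diam F / 2 + 1) / δ := by field_simp
  calc Real.log (coverNum F δ) ≤ Real.log ((diam F / 2 + 1) / δ) :=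
        Real.log_le_log (by exact_mod_cast h) hN
    _ = -Real.log δ + Real.log (diam F / 2 + 1) := by
        rw [Real.log_div (by linarith [diam_nonneg (s := F)]) hδ0.ne']
        ring

lemma isBoundedUnder_ge_coverExponent (F : Set ℝ) :
    IsBoundedUnder (· ≥ ·) (𝓝[>] 0) (coverExponent F) :=
  isBoundedUnder_of_eventually_ge <|
    eventually_mem_Ioo_zero_one.mono fun _ hδ => coverExponent_nonneg hδ.1 hδ.2

lemma eventually_coverExponent_le (hF : IsBounded F) : ∀ᶠ δ in 𝓝[>] 0,
    coverExponent F δ ≤ 1 + Real.log (diam F / 2 + 1) / -Real.log δ :=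
  eventually_mem_Ioo_zero_one.mono fun _ hδ => coverExponent_le hF hδ.1 hδ.2

lemma isCoboundedUnder_ge_coverExponent (hF : IsBounded F) :
    IsCoboundedUnder (· ≥ ·) (𝓝[>] 0) (coverExponent F) :=
  isCoboundedUnder_ge_of_eventually_le _ <| (eventually_coverExponent_le hF).and
    ((tendsto_one_add_div_neg_log _).eventually (gt_mem_nhds one_lt_two)) |>.mono
    fun _ h => h.1.trans h.2.le

lemma lowerBoxDim_nonneg (hF : IsBounded F) : 0 ≤ lowerBoxDim F :=
  le_liminf_of_le (isCoboundedUnder_ge_coverExponent hF) <|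
    eventually_mem_Ioo_zero_one.mono fun _ hδ => coverExponent_nonneg hδ.1 hδ.2

lemma lowerBoxDim_le_one (hF : IsBounded F) : lowerBoxDim F ≤ 1 :=
  (liminf_le_liminf (eventually_coverExponent_le hF) (isBoundedUnder_ge_coverExponent F)
    (tendsto_one_add_div_neg_log _).isCoboundedUnder_ge).trans_eq
    (tendsto_one_add_div_neg_log _).liminf_eq

lemma eventually_rpow_neg_lt_coverNum (hF : IsBounded F) (hne : F.Nonempty) {t : ℝ}
    (ht : t < lowerBoxDim F) : ∀ᶠ δ in 𝓝[>] 0, δ ^ (-t) < coverNum F δ := by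
  filter_upwards [eventually_lt_of_lt_liminf ht (isBoundedUnder_ge_coverExponent F),
    eventually_mem_Ioo_zero_one] with δ h hδ
  exact (lt_div_neg_log_iff (mod_cast one_le_coverNum hF hne hδ.1) hδ.1 hδ.2).mp h

lemma frequently_coverNum_lt_rpow_neg (hF : IsBounded F) (hne : F.Nonempty) {t : ℝ}
    (ht : lowerBoxDim F < t) : ∃ᶠ δ in 𝓝[>] 0, (coverNum F δ : ℝ) < δ ^ (-t) :=
  ((frequently_lt_of_liminf_lt (isCoboundedUnder_ge_coverExponent hF) ht).and_eventually
    eventually_mem_Ioo_zero_one).mono fun _ ⟨h, hδ⟩ =>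
      (div_neg_log_lt_iff (mod_cast one_le_coverNum hF hne hδ.1) hδ.1 hδ.2).mp h

end BoxDim

section IntermediateDim

lemma frequently_nhdsGT_zero_iff {p : ℝ → Prop} :
    (∃ᶠ δ in 𝓝[>] 0, p δ) ↔ ∀ δ₀ > 0, ∃ δ, 0 < δ ∧ δ ≤ δ₀ ∧ p δ := by
  rw [(nhdsGT_basis (0:ℝ)).frequently_iff]
  refine ⟨fun h δ₀ hδ₀ => ?_, fun h u hu => ?_⟩
  · obtain ⟨δ, hδ, hp⟩ := h δ₀ hδ₀
    exact ⟨δ, hδ.1, hδ.2.le, hp⟩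
  · obtain ⟨δ, hδ0, hδu, hp⟩ := h (u / 2) (half_pos hu)
    exact ⟨δ, ⟨hδ0, hδu.trans_lt (half_lt_self hu)⟩, hp⟩

lemma tendsto_rpow_nhdsGT_zero {e : ℝ} (he : 0 < e) :
    Tendsto (fun x : ℝ => x ^ e) (𝓝[>] 0) (𝓝[>] 0) := by
  refine tendsto_nhdsWithin_of_tendsto_nhds_of_eventually_within _ ?_
    (eventually_mem_nhdsWithin.mono fun x hx => Real.rpow_pos_of_pos hx e)
  simpa [Real.zero_rpow he.ne'] using
    (Real.continuousAt_rpow_const 0 e (Or.inr he.le)).tendsto.mono_left nhdsWithin_le_nhds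

lemma csInf_eq_of_forall_le_of_Ioi_subset {S : Set ℝ} {m : ℝ} (hle : ∀ s ∈ S, m ≤ s)
    (hgt : Ioi m ⊆ S) : sInf S = m :=
  csInf_eq_of_forall_ge_of_forall_gt_exists_lt ⟨m + 1, hgt (lt_add_one m)⟩ hle fun w hw =>
    ⟨(m + w) / 2, hgt (show m < (m + w) / 2 by linarith), by linarith⟩

def LowerIntCoverable (θ s : ℝ) (F : Set ℝ) : Prop :=
  ∀ ε > (0:ℝ), ∃ᶠ δ in 𝓝[>] 0, ∃ (I : Finset ℕ) (U : ℕ → Set ℝ), F ⊆ ⋃ i ∈ I, U i ∧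
    (∀ i ∈ I, δ ^ (1 / θ) ≤ diam (U i) ∧ diam (U i) ≤ δ) ∧ ∑ i ∈ I, diam (U i) ^ s ≤ ε

lemma lowerIntDim_eq_sInf {θ : ℝ} (hθ : θ ≠ 0) (F : Set ℝ) :
    lowerIntDim θ F = sInf {s | 0 ≤ s ∧ LowerIntCoverable θ s F} := by
  simp only [lowerIntDim, if_neg hθ, LowerIntCoverable, frequently_nhdsGT_zero_iff]

lemma sum_le_rpow_mul_sum_rpow {ι : Type*} {I : Finset ι} {d : ι → ℝ} {δ s : ℝ} (hs : s ≤ 1)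
    (hd : ∀ i ∈ I, 0 < d i ∧ d i ≤ δ) : ∑ i ∈ I, d i ≤ δ ^ (1 - s) * ∑ i ∈ I, d i ^ s := by
  rw [Finset.mul_sum]
  refine Finset.sum_le_sum fun i hi => ?_
  obtain ⟨hd0, hdδ⟩ := hd i hi
  calc d i = d i ^ (1 - s) * d i ^ s := by rw [← Real.rpow_add hd0, sub_add_cancel, Real.rpow_one]
    _ ≤ δ ^ (1 - s) * d i ^ s := by gcongr

lemma card_le_rpow_neg_mul_sum_rpow {ι : Type*} {I : Finset ι} {d : ι → ℝ} {τ s : ℝ}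
    (hτ : 0 < τ) (hs : 0 ≤ s) (hd : ∀ i ∈ I, τ ≤ d i) :
    (I.card : ℝ) ≤ τ ^ (-s) * ∑ i ∈ I, d i ^ s := by
  rw [Finset.mul_sum, Finset.card_eq_sum_ones, Nat.cast_sum, Nat.cast_one]
  refine Finset.sum_le_sum fun i hi => ?_
  calc (1 : ℝ) = τ ^ (-s) * τ ^ s := by rw [← Real.rpow_add hτ, neg_add_cancel, Real.rpow_zero]
    _ ≤ τ ^ (-s) * d i ^ s := by gcongr; exact hd i hi

lemma coverNum_le_mul_sum_rpow {F : Set ℝ} {ι : Type*} {I : Finset ι} {U : ι → Set ℝ}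
    {τ δ s ρ : ℝ} (hρ : 0 < ρ) (hτ : 0 < τ) (hs0 : 0 ≤ s) (hs1 : s ≤ 1)
    (hcov : F ⊆ ⋃ i ∈ I, U i) (hsize : ∀ i ∈ I, τ ≤ diam (U i) ∧ diam (U i) ≤ δ) :
    (coverNum F ρ : ℝ) ≤ (δ ^ (1 - s) / (2 * ρ) + τ ^ (-s)) * ∑ i ∈ I, diam (U i) ^ s := by
  have hpos : ∀ i ∈ I, 0 < diam (U i) := fun i hi => hτ.trans_le (hsize i hi).1
  have hbdd : ∀ i ∈ I, IsBounded (U i) := fun i hi => by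
    by_contra h
    exact (hpos i hi).ne' (diam_eq_zero_of_unbounded h)
  calc (coverNum F ρ : ℝ) ≤ ∑ i ∈ I, (diam (U i) / (2 * ρ) + 1) :=
        coverNum_le_sum_of_subset_biUnion hρ hcov hbdd
    _ = (∑ i ∈ I, diam (U i)) / (2 * ρ) + I.card := by
        rw [Finset.sum_add_distrib, Finset.sum_div, Finset.sum_const, nsmul_one]
    _ ≤ δ ^ (1 - s) * (∑ i ∈ I, diam (U i) ^ s) / (2 * ρ) +
          τ ^ (-s) * ∑ i ∈ I, diam (U i) ^ s := by
        gcongr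
        · exact sum_le_rpow_mul_sum_rpow hs1 fun i hi => ⟨hpos i hi, (hsize i hi).2⟩
        · exact card_le_rpow_neg_mul_sum_rpow hτ hs0 fun i hi => (hsize i hi).1
    _ = _ := by ring

lemma eventually_denom_pos_and {θ b : ℝ} {p : ℝ → Prop} (hden : 0 < 1 - (1 - θ) * b)
    (hp : ∀ᶠ y in 𝓝 (θ * b / (1 - (1 - θ) * b)), p y) :
    ∀ᶠ t in 𝓝 b, 0 < 1 - (1 - θ) * t ∧ p (θ * t / (1 - (1 - θ) * t)) := by
  have hcont : Continuous fun t : ℝ => 1 - (1 - θ) * t := by fun_prop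
  exact (hcont.continuousAt.eventually (lt_mem_nhds hden)).and <|
    ((continuousAt_const.mul continuousAt_id).div hcont.continuousAt hden.ne').eventually hp

lemma exists_lt_of_lt_div {θ b s : ℝ} (hθ0 : 0 < θ) (hθ1 : θ ≤ 1) (hb1 : b ≤ 1) (hs0 : 0 ≤ s)
    (hs : s < θ * b / (1 - (1 - θ) * b)) :
    ∃ t < b, s < t ∧ s / θ ≤ (1 - s) / (1 - t) * t := by
  have hden : 0 < 1 - (1 - θ) * b := by nlinarith
  obtain ⟨t, htb, htden, hst⟩ : ∃ t < b, 0 < 1 - (1 - θ) * t ∧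
      s < θ * t / (1 - (1 - θ) * t) :=
    (((eventually_denom_pos_and hden (lt_mem_nhds hs)).filter_mono
      (nhdsWithin_le_nhds (s := Iio b))).and self_mem_nhdsWithin).exists.imp
      fun t h => ⟨h.2, h.1⟩
  rw [lt_div_iff₀ htden] at hst
  have ht1 : t < 1 := htb.trans_le hb1
  have ht0 : 0 < t := by nlinarith [mul_nonneg hs0 htden.le]
  have hst' : s < t := by
    refine (mul_lt_mul_iff_left₀ htden).mp (hst.trans_le ?_)
    nlinarith [mul_nonneg (mul_nonneg ht0.le (sub_nonneg.mpr hθ1)) (sub_nonneg.mpr ht1.le)]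
  refine ⟨t, htb, hst', ?_⟩
  rw [div_le_iff₀ hθ0, div_mul_eq_mul_div, div_mul_eq_mul_div, le_div_iff₀ (by linarith)]
  nlinarith

lemma exists_gt_of_div_lt {θ b s : ℝ} (hθ0 : 0 < θ) (hθ1 : θ ≤ 1) (hb1 : b ≤ 1)
    (hs : θ * b / (1 - (1 - θ) * b) < s) :
    ∃ t > b, 0 < 1 - (1 - θ) * t ∧ θ * t < s * (1 - (1 - θ) * t) := by
  have hden : 0 < 1 - (1 - θ) * b := by nlinarith
  obtain ⟨t, htb, htden, hts⟩ : ∃ t > b, 0 < 1 - (1 - θ) * t ∧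
      θ * t / (1 - (1 - θ) * t) < s :=
    (((eventually_denom_pos_and hden (gt_mem_nhds hs)).filter_mono
      (nhdsWithin_le_nhds (s := Ioi b))).and self_mem_nhdsWithin).exists.imp
      fun t h => ⟨h.2, h.1⟩
  exact ⟨t, htb, htden, (div_lt_iff₀ htden).mp hts⟩

theorem le_of_lowerIntCoverable {F : Set ℝ} {θ s : ℝ} (hF : IsBounded F) (hne : F.Nonempty)
    (hθ0 : 0 < θ) (hθ1 : θ ≤ 1) (hs0 : 0 ≤ s) (hs : LowerIntCoverable θ s F) :
    θ * lowerBoxDim F / (1 - (1 - θ) * lowerBoxDim F) ≤ s := by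
  by_contra! hlt
  obtain ⟨t, htb, hst, hsα⟩ := exists_lt_of_lt_div hθ0 hθ1 (lowerBoxDim_le_one hF) hs0 hlt
  have ht1 : t < 1 := htb.trans_le (lowerBoxDim_le_one hF)
  set α := (1 - s) / (1 - t)
  have hα : α * (1 - t) = 1 - s := div_mul_cancel₀ _ (by linarith)
  have hα1 : 1 ≤ α := (one_le_div (by linarith)).mpr (by linarith)
  obtain ⟨δ, ⟨I, U, hcov, hsize, hsum⟩, ⟨hδ0, hδ1⟩, hN⟩ :=
    ((hs (1 / 2) one_half_pos).and_eventually (eventually_mem_Ioo_zero_one.and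
      ((tendsto_rpow_nhdsGT_zero (by linarith : 0 < α)).eventually
        (eventually_rpow_neg_lt_coverNum hF hne htb)))).exists
  rw [← Real.rpow_mul hδ0.le, mul_neg] at hN
  have h₁ : δ ^ (1 - s) / (2 * δ ^ α) ≤ δ ^ (-(α * t)) := by
    rw [show -(α * t) = 1 - s - α by linarith, Real.rpow_sub hδ0 (1 - s) α]
    have hδα := Real.rpow_pos_of_pos hδ0 α
    exact div_le_div_of_nonneg_left (Real.rpow_nonneg hδ0.le _) hδα (by linarith)
  have h₂ : (δ ^ (1 / θ)) ^ (-s) ≤ δ ^ (-(α * t)) := by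
    rw [← Real.rpow_mul hδ0.le]
    exact Real.rpow_le_rpow_of_exponent_ge hδ0 hδ1.le
      (by linarith [show 1 / θ * -s = -(s / θ) by ring])
  refine hN.not_ge ((coverNum_le_mul_sum_rpow (ρ := δ ^ α) (by positivity) (by positivity) hs0
    (by linarith) hcov hsize).trans ?_)
  calc (δ ^ (1 - s) / (2 * δ ^ α) + (δ ^ (1 / θ)) ^ (-s)) * ∑ i ∈ I, diam (U i) ^ s
      ≤ (δ ^ (-(α * t)) + δ ^ (-(α * t))) * (1 / 2) := by
        gcongr
    _ = δ ^ (-(α * t)) := by ring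

end IntermediateDim

section Da

variable {a : ℕ → ℝ}

lemma xseq_eq_add (ha : Summable a) (n : ℕ) : xseq a n = a n + xseq a (n + 1) := by
  have hs : Summable fun i => a (n + i) := by
    simpa only [add_comm] using (summable_nat_add_iff n).mpr ha
  rw [xseq, hs.tsum_eq_zero_add, xseq, add_zero]
  exact congrArg _ (tsum_congr fun i => congrArg a (by ring))

lemma xseq_nonneg (hpos : ∀ n ≥ 1, 0 < a n) {n : ℕ} (hn : 1 ≤ n) : 0 ≤ xseq a n :=
  tsum_nonneg fun i => (hpos _ (by omega)).le

lemma antitoneOn_xseq (ha : Summable a) (hpos : ∀ n ≥ 1, 0 < a n) :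
    AntitoneOn (xseq a) {n | 1 ≤ n} :=
  antitoneOn_nat_Ici_of_succ_le fun n hn => by linarith [xseq_eq_add ha n, hpos n hn]

lemma tendsto_xseq_atTop : Tendsto (xseq a) atTop (𝓝 0) :=
  (tendsto_sum_nat_add a).congr fun n => tsum_congr fun k => congrArg a (add_comm k n)

lemma xseq_mem_Da {k : ℕ} (hk : 1 ≤ k) : xseq a k ∈ Da a := Or.inr ⟨k, hk, rfl⟩

lemma Da_subset_Icc (ha : Summable a) (hpos : ∀ n ≥ 1, 0 < a n) :
    Da a ⊆ Icc 0 (xseq a 1) := by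
  rintro y (rfl | ⟨k, hk, rfl⟩)
  · exact ⟨le_rfl, xseq_nonneg hpos le_rfl⟩
  · exact ⟨xseq_nonneg hpos hk, antitoneOn_xseq ha hpos (le_refl 1) hk hk⟩

lemma isBounded_Da (ha : Summable a) (hpos : ∀ n ≥ 1, 0 < a n) : IsBounded (Da a) :=
  isBounded_Icc _ _ |>.subset (Da_subset_Icc ha hpos)

lemma countable_Da : (Da a).Countable :=
  (countable_singleton 0).union <| (countable_range (xseq a)).mono <| by
    rintro _ ⟨k, -, rfl⟩
    exact mem_range_self k

lemma a_le_sub_xseq (ha : Summable a) (hpos : ∀ n ≥ 1, 0 < a n) {k l : ℕ} (hk : 1 ≤ k)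
    (hkl : k < l) : a (l - 1) ≤ xseq a k - xseq a l := by
  have hsplit := xseq_eq_add ha (l - 1)
  rw [Nat.sub_add_cancel (show 1 ≤ l by omega)] at hsplit
  linarith [antitoneOn_xseq ha hpos hk (show 1 ≤ l - 1 by omega) (show k ≤ l - 1 by omega)]

lemma exists_mem_Da_dist_le (ha : Summable a) (hpos : ∀ n ≥ 1, 0 < a n)
    (hmono : ∀ n ≥ 1, a (n + 1) ≤ a n) {K : ℕ} (hK : 1 ≤ K) {y : ℝ}
    (hy : y ∈ Icc 0 (xseq a K)) : ∃ z ∈ Da a, dist y z ≤ a K := by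
  rcases hy.1.eq_or_lt with rfl | hy0
  · exact ⟨0, Or.inl rfl, by simpa using (hpos K hK).le⟩
  have hex : ∃ n, xseq a (n + 1) < y :=
    ((tendsto_xseq_atTop.comp (tendsto_add_atTop_nat 1)).eventually (gt_mem_nhds hy0)).exists
  set j := Nat.find hex
  have hKj : K ≤ j := by
    by_contra! h
    linarith [Nat.find_spec hex, antitoneOn_xseq ha hpos (show 1 ≤ j + 1 by omega) hK
      (show j + 1 ≤ K by omega), hy.2]
  have hyj : y ≤ xseq a j := by
    have := Nat.find_min hex (show j - 1 < j by omega)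
    rwa [not_lt, Nat.sub_add_cancel (by omega)] at this
  refine ⟨xseq a j, xseq_mem_Da (hK.trans hKj), ?_⟩
  rw [Real.dist_eq, abs_of_nonpos (by linarith)]
  linarith [xseq_eq_add ha j, Nat.find_spec hex, antitoneOn_nat_Ici_of_succ_le hmono hK
    (hK.trans hKj) hKj]

lemma exists_index_le_coverNum_Da (ha : Summable a) (hpos : ∀ n ≥ 1, 0 < a n)
    (hmono : ∀ n ≥ 1, a (n + 1) ≤ a n) {ρ : ℝ} (hρ : 0 < ρ) :
    ∃ K : ℕ, 1 ≤ K ∧ (K : ℝ) ≤ coverNum (Da a) ρ ∧ xseq a K ≤ 6 * ρ * coverNum (Da a) ρ := by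
  have hex : ∃ K, 1 ≤ K ∧ a K ≤ 2 * ρ :=
    ((ha.tendsto_atTop_zero.eventually (gt_mem_nhds (by positivity))).and
      (eventually_ge_atTop 1)).exists.imp fun _ h => ⟨h.2, h.1.le⟩
  obtain ⟨hK, haK⟩ := Nat.find_spec hex
  set K := Nat.find hex
  have hbig : ∀ m, 1 ≤ m → m < K → 2 * ρ < a m := fun m hm hmK =>
    not_le.mp (not_and.mp (Nat.find_min hex hmK) hm)
  have hsep : ∀ k ∈ Finset.Icc 1 K, ∀ l ∈ Finset.Icc 1 K, k ≠ l →
      2 * ρ < dist (xseq a k) (xseq a l) := by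
    intro k hk l hl hkl
    simp only [Finset.mem_Icc] at hk hl
    rw [Real.dist_eq]
    rcases hkl.lt_or_gt with h | h
    · exact (hbig _ (by omega) (by omega)).trans_le
        ((a_le_sub_xseq ha hpos hk.1 h).trans (le_abs_self _))
    · rw [abs_sub_comm]
      exact (hbig _ (by omega) (by omega)).trans_le
        ((a_le_sub_xseq ha hpos hl.1 h).trans (le_abs_self _))
  refine ⟨K, hK, ?_, ?_⟩
  · have := card_le_coverNum_of_separated (isBounded_Da ha hpos) hρ
      (fun k hk => xseq_mem_Da (Finset.mem_Icc.mp hk).1) hsep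
    rw [Nat.card_Icc, add_tsub_cancel_right] at this
    exact_mod_cast this
  · have := sub_le_mul_coverNum (isBounded_Da ha hpos) hρ (by positivity : (0:ℝ) ≤ 2 * ρ)
      fun y hy => (exists_mem_Da_dist_le ha hpos hmono hK hy).imp fun _ hz => ⟨hz.1, hz.2.trans haK⟩
    linarith

lemma exists_cover_Da (ha : Summable a) (hpos : ∀ n ≥ 1, 0 < a n) {K : ℕ} (hK : 1 ≤ K)
    {τ δ : ℝ} (hτ : 0 < τ) (hτδ : τ ≤ δ) (s : ℝ) :
    ∃ (I : Finset ℕ) (U : ℕ → Set ℝ), Da a ⊆ ⋃ i ∈ I, U i ∧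
      (∀ i ∈ I, τ ≤ diam (U i) ∧ diam (U i) ≤ δ) ∧
      ∑ i ∈ I, diam (U i) ^ s ≤ K * τ ^ s + (xseq a K / δ + 1) * δ ^ s := by
  have hδ : 0 < δ := hτ.trans_le hτδ
  set M := ⌊xseq a K / δ⌋₊ + 1
  set U : ℕ → Set ℝ := fun i => if i < K then Icc (xseq a (i + 1)) (xseq a (i + 1) + τ)
    else Icc ((i - K : ℕ) * δ) ((i - K : ℕ) * δ + δ)
  have hdiam : ∀ i, diam (U i) = if i < K then τ else δ := fun i => by
    by_cases h : i < K <;> simp [U, h, Real.diam_Icc, hτ.le, hδ.le]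
  have hgrid : Icc 0 (xseq a K) ⊆ ⋃ i ∈ Finset.range (K + M), U i := fun y hy => by
    have := Icc_subset_biUnion_Icc 0 (xseq a K) hδ
    simp only [zero_add] at this
    obtain ⟨j, hj, hyj⟩ := mem_iUnion₂.mp (this hy)
    refine mem_iUnion₂.mpr ⟨K + j, by simp only [Finset.mem_range] at hj ⊢; omega, ?_⟩
    simpa [U] using hyj
  refine ⟨Finset.range (K + M), U, ?_, fun i _ => ?_, ?_⟩
  · rintro y (rfl | ⟨k, hk, rfl⟩)
    · exact hgrid ⟨le_rfl, xseq_nonneg hpos hK⟩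
    rcases le_or_gt k K with hkK | hKk
    · refine mem_iUnion₂.mpr ⟨k - 1, Finset.mem_range.mpr (by omega), ?_⟩
      simp only [U, show k - 1 < K by omega, if_true, Nat.sub_add_cancel hk]
      exact ⟨le_rfl, by linarith⟩
    · exact hgrid ⟨xseq_nonneg hpos hk, antitoneOn_xseq ha hpos hK hk hKk.le⟩
  · rw [hdiam]
    split_ifs
    exacts [⟨le_rfl, hτδ⟩, ⟨hτδ, le_rfl⟩]
  · simp only [hdiam, Finset.sum_range_add, add_lt_iff_neg_left, not_lt_zero, if_false]
    rw [Finset.sum_congr rfl fun i hi => by rw [if_pos (Finset.mem_range.mp hi)]]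
    simp only [Finset.sum_const, Finset.card_range, nsmul_eq_mul]
    gcongr
    simp only [M, Nat.cast_add, Nat.cast_one]
    linarith [Nat.floor_le (div_nonneg (xseq_nonneg hpos hK) hδ.le)]

lemma cover_cost_le {ρ θ s t c K x : ℝ} (hρ : 0 < ρ) (hθ : 0 < θ) (hc : c = 1 - (1 - θ) * t)
    (hK : K ≤ ρ ^ (-t)) (hx : x ≤ 6 * ρ ^ (1 - t)) :
    K * ((ρ ^ c) ^ (1 / θ)) ^ s + (x / ρ ^ c + 1) * (ρ ^ c) ^ s ≤
      ρ ^ ((s * c - θ * t) / θ) + 6 * ρ ^ (s * c - θ * t) + ρ ^ (c * s) := by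
  simp only [← Real.rpow_mul hρ.le]
  have h₁ : K * ρ ^ (c * (1 / θ) * s) ≤ ρ ^ ((s * c - θ * t) / θ) := by
    calc K * ρ ^ (c * (1 / θ) * s) ≤ ρ ^ (-t) * ρ ^ (c * (1 / θ) * s) := by gcongr
      _ = ρ ^ ((s * c - θ * t) / θ) := by
          rw [← Real.rpow_add hρ]
          congr 1
          field_simp
          ring
  have h₂ : x / ρ ^ c * ρ ^ (c * s) ≤ 6 * ρ ^ (s * c - θ * t) := by
    calc x / ρ ^ c * ρ ^ (c * s) ≤ 6 * ρ ^ (1 - t) / ρ ^ c * ρ ^ (c * s) := by gcongr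
      _ = 6 * ρ ^ (s * c - θ * t) := by
          rw [mul_div_assoc, mul_assoc, ← Real.rpow_sub hρ, ← Real.rpow_add hρ, hc]
          ring_nf
  linarith

theorem lowerIntCoverable_Da (ha : Summable a) (hpos : ∀ n ≥ 1, 0 < a n)
    (hmono : ∀ n ≥ 1, a (n + 1) ≤ a n) {θ s : ℝ} (hθ0 : 0 < θ) (hθ1 : θ ≤ 1)
    (hs : θ * lowerBoxDim (Da a) / (1 - (1 - θ) * lowerBoxDim (Da a)) < s) :
    LowerIntCoverable θ s (Da a) := by
  intro ε hε
  have hF := isBounded_Da ha hpos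
  have hne : (Da a).Nonempty := ⟨0, Or.inl rfl⟩
  obtain ⟨t, hbt, hc, hts⟩ :=
    exists_gt_of_div_lt hθ0 hθ1 (lowerBoxDim_le_one hF) hs
  set c := 1 - (1 - θ) * t
  have he : 0 < s * c - θ * t := by linarith
  have hs0 : 0 < s := pos_of_mul_pos_left (by nlinarith [lowerBoxDim_nonneg hF]) hc.le
  have hcost : Tendsto (fun ρ : ℝ => ρ ^ ((s * c - θ * t) / θ) + 6 * ρ ^ (s * c - θ * t) +
      ρ ^ (c * s)) (𝓝[>] 0) (𝓝 0) := by
    have h := fun {e : ℝ} (he : 0 < e) => (tendsto_rpow_nhdsGT_zero he).mono_right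
      nhdsWithin_le_nhds
    simpa using ((h (div_pos he hθ0)).add ((h he).const_mul 6)).add (h (mul_pos hc hs0))
  refine (tendsto_rpow_nhdsGT_zero hc).frequently <|
    ((frequently_coverNum_lt_rpow_neg hF hne hbt).and_eventually
      (eventually_mem_Ioo_zero_one.and (hcost.eventually (ge_mem_nhds hε)))).mono ?_
  rintro ρ ⟨hN, ⟨hρ0, hρ1⟩, hsmall⟩
  obtain ⟨K, hK, hKN, hxN⟩ := exists_index_le_coverNum_Da ha hpos hmono hρ0
  have hδ1 : ρ ^ c ≤ 1 := Real.rpow_le_one hρ0.le hρ1.le hc.le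
  obtain ⟨I, U, hcov, hsize, hsum⟩ := exists_cover_Da ha hpos hK (τ := (ρ ^ c) ^ (1 / θ))
    (δ := ρ ^ c) (by positivity) ((Real.rpow_le_rpow_of_exponent_ge (by positivity) hδ1
      (one_le_one_div hθ0 hθ1)).trans_eq (Real.rpow_one _)) s
  refine ⟨I, U, hcov, hsize,
    hsum.trans ((cover_cost_le hρ0 hθ0 rfl (hKN.trans hN.le) ?_).trans hsmall)⟩
  calc xseq a K ≤ 6 * ρ * coverNum (Da a) ρ := hxN
    _ ≤ 6 * ρ * ρ ^ (-t) := by gcongr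
    _ = 6 * ρ ^ (1 - t) := by rw [sub_eq_add_neg, Real.rpow_add hρ0, Real.rpow_one, mul_assoc]

end Da

theorem lowerIntDim_Da_general (a : ℕ → ℝ) (hpos : ∀ n ≥ 1, 0 < a n) (hmono : ∀ n ≥ 1, a (n + 1) ≤ a n)
    (hsumm : Summable fun n => a (n + 1)) :
    ∀ θ ∈ Set.Icc (0:ℝ) 1,
      lowerIntDim θ (Da a) =
        θ * lowerBoxDim (Da a) / (1 - (1 - θ) * lowerBoxDim (Da a)) := by
  rintro θ ⟨hθ0, hθ1⟩
  have ha : Summable a := (summable_nat_add_iff 1).mp hsumm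
  rcases hθ0.eq_or_lt with rfl | hθ
  · simp [lowerIntDim, countable_Da.dimH_zero]
  have hF := isBounded_Da ha hpos
  have hden : 0 < 1 - (1 - θ) * lowerBoxDim (Da a) := by nlinarith [lowerBoxDim_le_one hF]
  rw [lowerIntDim_eq_sInf hθ.ne']
  refine csInf_eq_of_forall_le_of_Ioi_subset (fun s ⟨hs0, hs⟩ =>
    le_of_lowerIntCoverable hF ⟨0, Or.inl rfl⟩ hθ hθ1 hs0 hs) fun s hs =>
    ⟨?_, lowerIntCoverable_Da ha hpos hmono hθ hθ1 hs⟩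
  exact (div_nonneg (mul_nonneg hθ0 (lowerBoxDim_nonneg hF)) hden.le).trans hs.le

/-- `\underline{dim}_θ D_a = θb / (1 - (1-θ)b)` where `b` is the lower box dimension
of `D_a`. -/
theorem lowerIntDim_Da (a : ℕ → ℝ) (hpos : ∀ n ≥ 1, 0 < a n) (hmono : ∀ n ≥ 1, a (n + 1) ≤ a n)
    (hsumm : Summable fun n => a (n + 1)) (htot : ∑' n : ℕ, a (n + 1) = 1) :
    ∀ θ ∈ Set.Icc (0:ℝ) 1,
      lowerIntDim θ (Da a) =
        θ * lowerBoxDim (Da a) / (1 - (1 - θ) * lowerBoxDim (Da a)) :=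
  lowerIntDim_Da_general a hpos hmono hsumm
end
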